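/- Let H be a hypergraph with finitely many vertices and let s, C, and r be positive integers. Define the hypergraph T̃_{H,C,s} with vertex set V(H) and edge set {A ⊆ V(H) : |A| − alt_s(H[A]) > (s−1)C}. Then alt_r(T̃_{H,C,s}) ≤ r(s−1)C + alt_{rs}(H). -/

import Mathlib

universe u v

/-- A hypergraph on a vertex type `V`: a collection of subsets of `V`, its edges. -/
structure SetHypergraph (V : Type u) where
  edges : Set (Set V)

namespace SetHypergraph

variable {V : Type u}

/-- The subhypergraph `H[X]` induced by `X ⊆ V`, as a hypergraph on the vertex type `↥X`:
its edges correspond to the edges of `H` that are contained in `X`. -/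
def induce (H : SetHypergraph V) (X : Set V) : SetHypergraph X :=
  ⟨{e : Set X | Subtype.val '' e ∈ H.edges}⟩

/-- A coloring of the vertices is proper if no (nonempty) edge is monochromatic. -/
def IsProper {α : Type v} (H : SetHypergraph V) (c : V → α) : Prop :=
  ∀ e ∈ H.edges, e.Nonempty → ¬ ∃ a, ∀ v ∈ e, c v = a

/-- `H` is `n`-colorable if it admits a proper coloring with `n` colors. -/
def Colorable (H : SetHypergraph V) (n : ℕ) : Prop :=
  ∃ c : V → Fin n, H.IsProper c

/-- The chromatic number of a hypergraph, valued in `ℕ∞` (`⊤` if no proper coloring exists). -/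
noncomputable def chromNum (H : SetHypergraph V) : ℕ∞ :=
  sInf {C : ℕ∞ | ∃ n : ℕ, C = n ∧ H.Colorable n}

/-- The `r`-colorability defect `cd_r(H)`: the minimum number of vertices whose removal
leaves an `r`-colorable induced subhypergraph. -/
noncomputable def cd (H : SetHypergraph V) (r : ℕ) : ℕ∞ :=
  sInf {c : ℕ∞ | ∃ Y : Set V, (H.induce Yᶜ).Colorable r ∧ c = Y.encard}

/-- The Kneser hypergraph `KG^r(H)`: its vertices are the edges of `H`, and its edges are
the sets of `r` pairwise disjoint edges of `H`. -/
def kneser (H : SetHypergraph V) (r : ℕ) : SetHypergraph H.edges :=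
  ⟨{F : Set H.edges | F.encard = r ∧
      F.Pairwise fun e f => Disjoint (e : Set V) (f : Set V)}⟩

end SetHypergraph

/-- The categorical product of a finite family of hypergraphs: a set of vertex tuples is an
edge iff its projection on each coordinate is an edge of the corresponding factor. -/
def hProd {t : ℕ} {W : Fin t → Type u} (H : ∀ i, SetHypergraph (W i)) :
    SetHypergraph (∀ i, W i) :=
  ⟨{e : Set (∀ i, W i) | ∀ i, (fun v => v i) '' e ∈ (H i).edges}⟩

/-- The categorical product of two hypergraphs. -/
def hProd2 {V : Type u} {V' : Type v} (G : SetHypergraph V) (G' : SetHypergraph V') :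
    SetHypergraph (V × V') :=
  ⟨{e : Set (V × V') | Prod.fst '' e ∈ G.edges ∧ Prod.snd '' e ∈ G'.edges}⟩
/-- The maximum length of an alternating subsequence of the nonzero entries of `x`, where
`x ∈ (Z_r ∪ {0})^n` is encoded with `none` for `0` and `ZMod r` for the `r`-th roots of
unity (`j ∈ ZMod r` corresponding to `ω^j`). -/
noncomputable def altSeq {r n : ℕ} (x : Fin n → Option (ZMod r)) : ℕ :=
  sSup {k : ℕ | ∃ f : Fin k → Fin n, StrictMono f ∧ (∀ j, x (f j) ≠ none) ∧
    ∀ (j : ℕ) (h : j + 1 < k), x (f ⟨j, Nat.lt_of_succ_lt h⟩) ≠ x (f ⟨j + 1, h⟩)}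

/-- The `r`-alternation number `alt_r(H)` of a hypergraph: the minimum, over identifications
`π` of `Fin n` with the vertex set (`n = |V(H)|`), of the maximum of `altSeq x` over all
vectors `x ∈ (Z_r ∪ {0})^n` none of whose supports `supp_j(x)` contains an edge of `H`. -/
noncomputable def altNum {V : Type u} (r : ℕ) (H : SetHypergraph V) : ℕ :=
  ⨅ π : Fin (Nat.card V) ≃ V,
    sSup {a : ℕ | ∃ x : Fin (Nat.card V) → Option (ZMod r),
      (∀ j : ZMod r, ∀ E ∈ H.edges, ¬ E ⊆ (fun i => π i) '' {i | x i = some j}) ∧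
      a = altSeq x}


/-!
Fix an ordering `π` of `V` realising `alt_{rs}(H)` and a vector `x` admissible for `T̃_{H,C,s}`
with classes `A_j = π(supp_j x)`. No `A_j` is an edge of `T̃`, so
`|A_j| ≤ (s-1)C + alt_s(H[A_j])`. Order `A_j` as `π` does and keep only a longest alternating
subsequence of an optimal vector for `H[A_j]`: this is a vector supported on `A_j` with
`alt_s(H[A_j])` nonzero entries, any two consecutive ones distinct, none of whose colour classes
contains an edge of `H`. Gluing these `r` vectors with colours `(j, t) ∈ Z_r × Z_s ≃ Z_{rs}` gives
a vector admissible for `H` whose nonzero entries alternate, whence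
`alt(x) ≤ ∑ |A_j| ≤ r(s-1)C + ∑ alt_s(H[A_j]) ≤ r(s-1)C + alt_{rs}(H)`.
-/

open Finset Function

section Alternating

variable {ι κ α : Type*}

def IsAlternating [LT ι] (x : ι → Option α) : Prop :=
  ∀ ⦃i j⦄, i < j → x i ≠ none → x j ≠ none → (∀ l, i < l → l < j → x l = none) → x i ≠ x j

theorem card_ne_none_eq_sum [Fintype ι] [Fintype α] [DecidableEq α] (x : ι → Option α) :
    #{i | x i ≠ none} = ∑ a, #{i | x i = some a} := by
  have hfib := card_eq_sum_card_fiberwise (s := univ) (t := univ) (f := x) fun _ _ => mem_univ _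
  rw [Fintype.sum_option] at hfib
  have hsplit := card_filter_add_card_filter_not (s := univ) fun i => x i = none
  simp only [ne_eq] at hsplit ⊢
  omega

theorem mem_range_of_extend_ne_none {g : ι → κ} {w : ι → Option α} {i : κ}
    (h : extend g w (fun _ => none) i ≠ none) : ∃ p, g p = i := by
  by_contra hi
  exact h (extend_apply' _ _ _ hi)

theorem IsAlternating.extend [LinearOrder ι] [LinearOrder κ] {g : ι → κ} (hg : StrictMono g)
    {w : ι → Option α} (hw : IsAlternating w) :
    IsAlternating (Function.extend g w fun _ => none) := by
  intro i j hij hi hj hbetween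
  obtain ⟨p, rfl⟩ := mem_range_of_extend_ne_none hi
  obtain ⟨q, rfl⟩ := mem_range_of_extend_ne_none hj
  simp only [hg.injective.extend_apply] at hi hj ⊢
  refine hw (hg.lt_iff_lt.mp hij) hi hj fun l hpl hlq => ?_
  rw [← hg.injective.extend_apply w (fun _ => none) l]
  exact hbetween _ (hg hpl) (hg hlq)

theorem card_extend_ne_none [Fintype ι] [Fintype κ] {g : ι → κ} (hg : Injective g)
    (w : ι → Option α) :
    #{i | extend g w (fun _ => none) i ≠ none} = #{p | w p ≠ none} := by
  symm
  refine card_bij (fun p _ => g p) (fun p hp => ?_) (fun p _ q _ h => hg h) fun i hi => ?_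
  · simpa [hg.extend_apply] using hp
  · obtain ⟨p, rfl⟩ := mem_range_of_extend_ne_none (mem_filter.mp hi).2
    exact ⟨p, by simpa [hg.extend_apply] using hi, rfl⟩

end Alternating

section AltSeq

variable {r n : ℕ}

def IsAltSubseq (x : Fin n → Option (ZMod r)) {k : ℕ} (f : Fin k → Fin n) : Prop :=
  StrictMono f ∧ (∀ j, x (f j) ≠ none) ∧
    ∀ (j : ℕ) (h : j + 1 < k), x (f ⟨j, Nat.lt_of_succ_lt h⟩) ≠ x (f ⟨j + 1, h⟩)

theorem IsAltSubseq.le_card {x : Fin n → Option (ZMod r)} {k : ℕ} {f : Fin k → Fin n}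
    (hf : IsAltSubseq x f) : k ≤ #{i | x i ≠ none} := by
  simpa using card_le_card_of_injOn (s := univ) (t := {i | x i ≠ none}) f
    (fun j _ => by simpa using hf.2.1 j) hf.1.injective.injOn

theorem bddAbove_isAltSubseq (x : Fin n → Option (ZMod r)) :
    BddAbove {k | ∃ f : Fin k → Fin n, IsAltSubseq x f} :=
  ⟨_, fun _ ⟨_, hf⟩ => IsAltSubseq.le_card hf⟩

theorem IsAltSubseq.le_altSeq {x : Fin n → Option (ZMod r)} {k : ℕ} {f : Fin k → Fin n}
    (hf : IsAltSubseq x f) : k ≤ altSeq x :=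
  le_csSup (bddAbove_isAltSubseq x) ⟨f, hf⟩

theorem altSeq_le_card (x : Fin n → Option (ZMod r)) : altSeq x ≤ #{i | x i ≠ none} :=
  csSup_le' fun _ ⟨_, hf⟩ => IsAltSubseq.le_card hf

theorem exists_isAltSubseq_altSeq (x : Fin n → Option (ZMod r)) :
    ∃ f : Fin (altSeq x) → Fin n, IsAltSubseq x f :=
  have hempty : ∃ f : Fin 0 → Fin n, IsAltSubseq x f :=
    ⟨Fin.elim0, fun a => a.elim0, fun j => j.elim0, fun _ h => by omega⟩
  Nat.sSup_mem ⟨0, hempty⟩ (bddAbove_isAltSubseq x)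

theorem IsAltSubseq.isAlternating_comp {x : Fin n → Option (ZMod r)} {k : ℕ}
    {f : Fin k → Fin n} (hf : IsAltSubseq x f) : IsAlternating (x ∘ f) := by
  intro i j hij _ _ hbetween
  have hsucc : (j : ℕ) = i + 1 := by
    by_contra hne
    have hlt : (i : ℕ) + 1 < j := by omega
    exact hf.2.1 ⟨i + 1, by omega⟩ (hbetween _ (Fin.mk_lt_mk.mpr (by omega)) hlt)
  obtain ⟨j, hj⟩ := j
  subst hsucc
  exact hf.2.2 i hj

theorem IsAlternating.card_le_altSeq {x : Fin n → Option (ZMod r)} (hx : IsAlternating x) :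
    #{i | x i ≠ none} ≤ altSeq x := by
  set S : Finset (Fin n) := {i | x i ≠ none}
  set f := S.orderEmbOfFin rfl
  have hfS : ∀ j, f j ∈ S := S.orderEmbOfFin_mem rfl
  refine IsAltSubseq.le_altSeq (f := f) ⟨f.strictMono, fun j => (mem_filter.mp (hfS j)).2,
    fun j h => hx (f.strictMono (Fin.mk_lt_mk.mpr (Nat.lt_succ_self j)))
      (mem_filter.mp (hfS _)).2 (mem_filter.mp (hfS _)).2 fun l hl1 hl2 => ?_⟩
  by_contra hl
  obtain ⟨c, rfl⟩ : l ∈ Set.range f := by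
    rw [S.range_orderEmbOfFin rfl]
    simpa [S] using hl
  have h1 := f.lt_iff_lt.mp hl1
  have h2 := f.lt_iff_lt.mp hl2
  simp only [Fin.lt_def] at h1 h2
  omega

end AltSeq

section Admissible

variable {ι κ V α : Type*}

def IsAdmissible (G : SetHypergraph V) (π : ι → V) (x : ι → Option α) : Prop :=
  ∀ a, ∀ E ∈ G.edges, ¬ E ⊆ π '' {i | x i = some a}

theorem empty_mem_induce_iff {G : SetHypergraph V} {A : Set V} :
    ∅ ∈ (G.induce A).edges ↔ ∅ ∈ G.edges := by
  simp [SetHypergraph.induce]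

theorem IsAdmissible.of_induce {G : SetHypergraph V} {A : Set V} {ρ : κ → A}
    {y : κ → Option α} (hy : IsAdmissible (G.induce A) ρ y) {π : ι → V} {u : ι → Option α}
    (hu : ∀ i a, u i = some a → ∃ d, y d = some a ∧ (ρ d : V) = π i) : IsAdmissible G π u := by
  intro a E hE hsub
  have hEA : E ⊆ A := fun v hv => by
    obtain ⟨i, hi, rfl⟩ := hsub hv
    obtain ⟨d, -, hd⟩ := hu i a hi
    exact hd ▸ (ρ d).2
  refine hy a (Subtype.val ⁻¹' E) ?_ fun v hv => ?_
  · show Subtype.val '' (Subtype.val ⁻¹' E) ∈ G.edges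
    rwa [Subtype.image_preimage_coe, Set.inter_eq_self_of_subset_right hEA]
  · obtain ⟨i, hi, hiv⟩ := hsub hv
    obtain ⟨d, hd, hdi⟩ := hu i a hi
    exact ⟨d, hd, Subtype.ext (hdi.trans hiv)⟩

end Admissible

section AltNumAt

variable {V : Type*} {m : ℕ} {G : SetHypergraph V}

noncomputable def altNumAt (m : ℕ) (G : SetHypergraph V) (π : Fin (Nat.card V) ≃ V) : ℕ :=
  sSup (altSeq '' {x : Fin (Nat.card V) → Option (ZMod m) | IsAdmissible G π x})

theorem altNum_eq_iInf_altNumAt : altNum m G = ⨅ π, altNumAt m G π :=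
  iInf_congr fun _ => congrArg sSup <| Set.ext fun _ =>
    ⟨fun ⟨x, hx, h⟩ => ⟨x, hx, h.symm⟩, fun ⟨x, hx, h⟩ => ⟨x, hx, h.symm⟩⟩

theorem bddAbove_altNumAt (π : Fin (Nat.card V) ≃ V) :
    BddAbove (altSeq '' {x : Fin (Nat.card V) → Option (ZMod m) | IsAdmissible G π x}) :=
  ⟨Nat.card V, by
    rintro _ ⟨x, -, rfl⟩
    exact (altSeq_le_card x).trans (card_le_univ _ |>.trans_eq (Fintype.card_fin _))⟩

theorem IsAdmissible.altSeq_le_altNumAt {π : Fin (Nat.card V) ≃ V}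
    {x : Fin (Nat.card V) → Option (ZMod m)} (hx : IsAdmissible G π x) :
    altSeq x ≤ altNumAt m G π :=
  le_csSup (bddAbove_altNumAt π) (Set.mem_image_of_mem _ hx)

theorem altNumAt_le {π : Fin (Nat.card V) ≃ V} {b : ℕ}
    (h : ∀ x : Fin (Nat.card V) → Option (ZMod m), IsAdmissible G π x → altSeq x ≤ b) :
    altNumAt m G π ≤ b :=
  csSup_le' <| by
    rintro _ ⟨x, hx, rfl⟩
    exact h x hx

theorem exists_isAdmissible_altSeq_eq (π : Fin (Nat.card V) ≃ V) (h : ∅ ∉ G.edges) :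
    ∃ x : Fin (Nat.card V) → Option (ZMod m), IsAdmissible G π x ∧ altSeq x = altNumAt m G π := by
  have hnone : IsAdmissible G π fun _ => (none : Option (ZMod m)) := fun _ E hE hsub =>
    h (by simpa [Set.subset_empty_iff.mp (by simpa using hsub)] using hE)
  exact Nat.sSup_mem ((Set.nonempty_of_mem hnone).image _) (bddAbove_altNumAt π)

theorem altNumAt_eq_zero_of_empty_mem (π : Fin (Nat.card V) ≃ V) (h : ∅ ∈ G.edges) :
    altNumAt m G π = 0 :=
  Nat.eq_zero_of_le_zero <| altNumAt_le fun _ hx => (hx 0 ∅ h (Set.empty_subset _)).elim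

theorem altNum_le_altNumAt (π : Fin (Nat.card V) ≃ V) : altNum m G ≤ altNumAt m G π :=
  altNum_eq_iInf_altNumAt ▸ ciInf_le (OrderBot.bddBelow _) π

theorem exists_altNumAt_eq_altNum [Finite V] (m : ℕ) (G : SetHypergraph V) :
    ∃ π, altNumAt m G π = altNum m G :=
  have : Nonempty (Fin (Nat.card V) ≃ V) := ⟨(Finite.equivFin V).symm⟩
  altNum_eq_iInf_altNumAt ▸ Nat.sInf_mem (Set.range_nonempty _)

theorem altNum_eq_zero_of_empty_mem [Finite V] (h : ∅ ∈ G.edges) : altNum m G = 0 := by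
  obtain ⟨π, hπ⟩ := exists_altNumAt_eq_altNum m G
  rw [← hπ, altNumAt_eq_zero_of_empty_mem π h]

end AltNumAt

section Glue

variable {ι α β γ : Type*} (ψ : α × β ≃ γ) {x : ι → Option α} {u : α → ι → Option β}

def glue (ψ : α × β ≃ γ) (x : ι → Option α) (u : α → ι → Option β) (i : ι) : Option γ :=
  (x i).bind fun a => (u a i).map fun b => ψ (a, b)

theorem glue_eq_some_iff (hu : ∀ a i, u a i ≠ none → x i = some a) {i : ι} {c : γ} :
    glue ψ x u i = some c ↔ u (ψ.symm c).1 i = some (ψ.symm c).2 := by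
  obtain ⟨⟨a, b⟩, rfl⟩ := ψ.surjective c
  simp only [glue, Equiv.symm_apply_apply, Option.bind_eq_some_iff, Option.map_eq_some_iff,
    ψ.injective.eq_iff, Prod.mk.injEq]
  constructor
  · rintro ⟨a', -, b', hb', rfl, rfl⟩
    exact hb'
  · intro h
    exact ⟨a, hu a i (by simp [h]), b, h, rfl, rfl⟩

theorem glue_ne_none_of_eq_some (hu : ∀ a i, u a i ≠ none → x i = some a) {a : α} {i : ι}
    {b : β} (h : u a i = some b) : glue ψ x u i ≠ none := by
  rw [Option.ne_none_iff_exists']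
  exact ⟨ψ (a, b), (glue_eq_some_iff ψ hu).mpr (by simpa using h)⟩

theorem isAlternating_glue [LinearOrder ι] (hu : ∀ a i, u a i ≠ none → x i = some a)
    (halt : ∀ a, IsAlternating (u a)) : IsAlternating (glue ψ x u) := by
  intro i j hij hi hj hbetween heq
  obtain ⟨c, hc⟩ := Option.ne_none_iff_exists'.mp hi
  have hui := (glue_eq_some_iff ψ hu).mp hc
  have huj := (glue_eq_some_iff ψ hu).mp (heq ▸ hc)
  refine halt (ψ.symm c).1 hij (by simp [hui]) (by simp [huj]) (fun l hil hlj => ?_)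
    (hui.trans huj.symm)
  by_contra hl
  obtain ⟨b, hb⟩ := Option.ne_none_iff_exists'.mp hl
  exact glue_ne_none_of_eq_some ψ hu hb (hbetween l hil hlj)

theorem card_glue_ne_none [Fintype ι] [Fintype α] [Fintype β] [Fintype γ] [DecidableEq α]
    [DecidableEq β] [DecidableEq γ] (hu : ∀ a i, u a i ≠ none → x i = some a) :
    #{i | glue ψ x u i ≠ none} = ∑ a, #{i | u a i ≠ none} := by
  calc #{i | glue ψ x u i ≠ none}
      = ∑ c, #{i | u (ψ.symm c).1 i = some (ψ.symm c).2} := by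
        simp only [card_ne_none_eq_sum, glue_eq_some_iff ψ hu]
    _ = ∑ p : α × β, #{i | u p.1 i = some p.2} := ψ.symm.sum_comp fun p => #{i | u p.1 i = some p.2}
    _ = ∑ a, #{i | u a i ≠ none} := by
        simp only [Fintype.sum_prod_type, card_ne_none_eq_sum]

theorem isAdmissible_glue {V : Type*} {G : SetHypergraph V} {π : ι → V}
    (hu : ∀ a i, u a i ≠ none → x i = some a) (hadm : ∀ a, IsAdmissible G π (u a)) :
    IsAdmissible G π (glue ψ x u) := by
  intro c E hE hsub
  refine hadm (ψ.symm c).1 (ψ.symm c).2 E hE ?_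
  rwa [show {i | glue ψ x u i = some c} = {i | u (ψ.symm c).1 i = some (ψ.symm c).2} from
    Set.ext fun i => glue_eq_some_iff ψ hu] at hsub

end Glue

section Induce

variable {V : Type*} {n : ℕ}

theorem exists_equiv_strictMono_symm_comp (π : Fin n ≃ V) (A : Set V) :
    ∃ ρ : Fin (Nat.card A) ≃ A, StrictMono fun d => π.symm (ρ d) := by
  classical
  set S : Finset (Fin n) := {i | π i ∈ A}
  let σ : S ≃ A := π.subtypeEquiv fun i => by simp [S]
  have hcard : S.card = Nat.card A := by
    rw [← Nat.card_congr σ, Nat.card_eq_fintype_card, Fintype.card_coe]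
  refine ⟨(S.orderIsoOfFin hcard).toEquiv.trans σ, fun d d' h => ?_⟩
  show π.symm (π (S.orderIsoOfFin hcard d)) < π.symm (π (S.orderIsoOfFin hcard d'))
  rw [π.symm_apply_apply, π.symm_apply_apply]
  exact (S.orderIsoOfFin hcard).strictMono h

theorem exists_isAlternating_isAdmissible_of_induce (G : SetHypergraph V) (m : ℕ)
    (π : Fin n ≃ V) (A : Set V) (h : ∅ ∉ G.edges) :
    ∃ u : Fin n → Option (ZMod m), (∀ i, u i ≠ none → π i ∈ A) ∧ IsAlternating u ∧
      IsAdmissible G π u ∧ altNum m (G.induce A) ≤ #{i | u i ≠ none} := by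
  obtain ⟨ρ, hρ⟩ := exists_equiv_strictMono_symm_comp π A
  obtain ⟨y, hy, hyρ⟩ :=
    exists_isAdmissible_altSeq_eq (m := m) ρ (mt empty_mem_induce_iff.mp h)
  obtain ⟨f, hf⟩ := exists_isAltSubseq_altSeq y
  set g := fun p => π.symm (ρ (f p))
  have hg : StrictMono g := hρ.comp hf.1
  have hsome : ∀ i b, extend g (y ∘ f) (fun _ => none) i = some b →
      ∃ p, y (f p) = some b ∧ (ρ (f p) : V) = π i := by
    intro i b hi
    obtain ⟨p, rfl⟩ := mem_range_of_extend_ne_none (g := g) (hi ▸ Option.some_ne_none b)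
    rw [hg.injective.extend_apply] at hi
    exact ⟨p, hi, by simp [g]⟩
  refine ⟨extend g (y ∘ f) fun _ => none, fun i hi => ?_, hf.isAlternating_comp.extend hg,
    hy.of_induce fun i b hi => ?_, ?_⟩
  · obtain ⟨b, hb⟩ := Option.ne_none_iff_exists'.mp hi
    obtain ⟨p, -, hp⟩ := hsome i b hb
    exact hp ▸ (ρ (f p)).2
  · obtain ⟨p, hp⟩ := hsome i b hi
    exact ⟨f p, hp⟩
  · calc altNum m (G.induce A) ≤ altSeq y := hyρ ▸ altNum_le_altNumAt ρ
      _ = #{p | (y ∘ f) p ≠ none} := by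
        simp only [Function.comp_apply]
        rw [filter_true_of_mem fun p _ => hf.2.1 p, card_univ, Fintype.card_fin]
      _ = _ := (card_extend_ne_none hg.injective _).symm

end Induce

theorem sum_altNum_induce_le_altNumAt {V : Type*} [Finite V] (H : SetHypergraph V) {r : ℕ}
    [NeZero r] (s : ℕ) [NeZero s] (π : Fin (Nat.card V) ≃ V)
    (x : Fin (Nat.card V) → Option (ZMod r)) :
    ∑ j, altNum s (H.induce (π '' {i | x i = some j})) ≤ altNumAt (r * s) H π := by
  by_cases h : ∅ ∈ H.edges
  · simp [altNum_eq_zero_of_empty_mem (empty_mem_induce_iff.mpr h)]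
  choose u hsupp halt hadm hle using fun j : ZMod r =>
    exists_isAlternating_isAdmissible_of_induce H s π (π '' {i | x i = some j}) h
  have hu : ∀ j i, u j i ≠ none → x i = some j := fun j i hi =>
    π.injective.mem_set_image.mp (hsupp j i hi)
  let ψ : ZMod r × ZMod s ≃ ZMod (r * s) :=
    Fintype.equivOfCardEq (by simp only [Fintype.card_prod, ZMod.card])
  calc ∑ j, altNum s (H.induce (π '' {i | x i = some j}))
      ≤ ∑ j, #{i | u j i ≠ none} := sum_le_sum fun j _ => hle j
    _ = #{i | glue ψ x u i ≠ none} := (card_glue_ne_none ψ hu).symm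
    _ ≤ altSeq (glue ψ x u) := (isAlternating_glue ψ hu halt).card_le_altSeq
    _ ≤ altNumAt (r * s) H π := (isAdmissible_glue ψ hu hadm).altSeq_le_altNumAt

theorem altNum_auxiliary_le_general {V : Type u} [Finite V] (H : SetHypergraph V) (s C r : ℕ)
    (hs : 0 < s) (hr : 0 < r) :
    altNum r (SetHypergraph.mk
        {A : Set V | (s - 1) * C < A.ncard - altNum s (H.induce A)})
      ≤ r * (s - 1) * C + altNum (r * s) H := by
  have : NeZero r := ⟨hr.ne'⟩
  have : NeZero s := ⟨hs.ne'⟩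
  obtain ⟨π, hπ⟩ := exists_altNumAt_eq_altNum (r * s) H
  refine (altNum_le_altNumAt π).trans (altNumAt_le fun x hx => ?_)
  have hclass : ∀ j, #{i | x i = some j} ≤
      (s - 1) * C + altNum s (H.induce (π '' {i | x i = some j})) := fun j => by
    have hA : ¬(s - 1) * C < (π '' {i | x i = some j}).ncard -
        altNum s (H.induce (π '' {i | x i = some j})) := fun hA => hx j _ hA subset_rfl
    have hcard : (π '' {i | x i = some j}).ncard = #{i | x i = some j} := by
      rw [Set.ncard_image_of_injective _ π.injective, ← coe_filter_univ, Set.ncard_coe_finset]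
    omega
  calc altSeq x ≤ #{i | x i ≠ none} := altSeq_le_card x
    _ = ∑ j, #{i | x i = some j} := card_ne_none_eq_sum x
    _ ≤ ∑ j, ((s - 1) * C + altNum s (H.induce (π '' {i | x i = some j}))) :=
        sum_le_sum fun j _ => hclass j
    _ = r * (s - 1) * C + ∑ j, altNum s (H.induce (π '' {i | x i = some j})) := by
        rw [sum_add_distrib, sum_const, card_univ, ZMod.card, smul_eq_mul, mul_assoc]
    _ ≤ r * (s - 1) * C + altNum (r * s) H :=
        hπ ▸ Nat.add_le_add_left (sum_altNum_induce_le_altNumAt H s π x) _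

/-- **Lemma.** For a hypergraph `H` with finitely many vertices and positive integers
`s, C, r`, let `T̃_{H,C,s}` be the hypergraph with vertex set `V(H)` and edges
`{A ⊆ V(H) : |A| − alt_s(H[A]) > (s−1)C}`. Then
`alt_r(T̃_{H,C,s}) ≤ r(s−1)C + alt_{rs}(H)`. -/
theorem altNum_auxiliary_le {V : Type u} [Finite V] (H : SetHypergraph V) (s C r : ℕ)
    (hs : 0 < s) (hC : 0 < C) (hr : 0 < r) :
    altNum r (SetHypergraph.mk
        {A : Set V | (s - 1) * C < A.ncard - altNum s (H.induce A)})
      ≤ r * (s - 1) * C + altNum (r * s) H :=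
  altNum_auxiliary_le_general H s C r hs hr
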